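/- In the Shirshov factorization w = c₁c₂⋯cₙ of a word w into a nondecreasing product of Lyndon words, every Lyndon subword (factor) v of w is a factor of one of the words cᵢ. -/

import Mathlib

/-! In the order `≻` of `gtLex`, a Lyndon word is greater than each of its proper nonempty
suffixes, and every word is smaller than each of its proper prefixes. A Lyndon factor `v` of
`c₁c₂⋯cₙ` lying inside no `cᵢ` would begin with a nonempty suffix `x` of some `cᵢ` and end with a
nonempty prefix `y` of some `cⱼ`, `i < j`; then `v ≻ y ⪰ cⱼ ⪰ cᵢ ⪰ x ≻ v`. -/

/-- The lexicographic ordering on words with the convention that a proper prefix is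
greater than the word extending it (`u ≻ uv` for `v ≠ 1`): `gtLex u v` means `u ≻ v`. -/
def gtLex {X : Type*} [LinearOrder X] : List X → List X → Prop
  | [], [] => False
  | [], _ :: _ => True
  | _ :: _, [] => False
  | a :: u, b :: v => b < a ∨ (a = b ∧ gtLex u v)

/-- `w` is an associative Lyndon–Shirshov word: `w` is nonempty and `w ≻ v ++ u` for every
factorization `w = u ++ v` into nonempty words. -/
def IsALSW {X : Type*} [LinearOrder X] (w : List X) : Prop :=
  w ≠ [] ∧ ∀ u v : List X, u ≠ [] → v ≠ [] → w = u ++ v → gtLex w (v ++ u)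

namespace List

variable {α : Type*} {r : α → α → Prop} {l₁ l₂ : List α}

theorem Lex.append_of_not_prefix (h : Lex r l₁ l₂)
    (hp : ¬ l₁ <+: l₂) (s t : List α) : Lex r (l₁ ++ s) (l₂ ++ t) := by
  induction h with
  | nil => exact absurd nil_prefix hp
  | rel h => exact .rel h
  | cons _ ih => exact .cons (ih fun hp' => hp ((prefix_cons_inj _).2 hp'))

theorem Lex.of_append_left [Std.Irrefl r] (s : List α)
    (h : Lex r (s ++ l₁) (s ++ l₂)) : Lex r l₁ l₂ := by
  induction s with
  | nil => exact h
  | cons a s ih => exact ih (lex_cons_iff.1 h)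

theorem exists_prefix_of_prefix_flatten {z : List α} {ds : List (List α)} (hz : z ≠ [])
    (h : z <+: ds.flatten) : ∃ d ∈ ds, ∃ m y, y ≠ [] ∧ y <+: d ∧ z = m ++ y := by
  induction ds generalizing z with
  | nil => exact absurd (prefix_nil.1 h) hz
  | cons d ds ih =>
    obtain ⟨t, ht⟩ := h
    rcases append_eq_append_iff.1 (ht.trans flatten_cons) with ⟨a, rfl, -⟩ | ⟨z', rfl, hz'⟩
    · exact ⟨_, mem_cons_self, [], z, hz, prefix_append _ _, rfl⟩
    · rcases eq_or_ne z' [] with rfl | hz'ne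
      · exact ⟨d, mem_cons_self, [], d, by simpa using hz, prefix_rfl, by simp⟩
      · obtain ⟨d', hd', m, y, hy, hyd', rfl⟩ := ih hz'ne ⟨t, hz'.symm⟩
        exact ⟨d', mem_cons_of_mem _ hd', d ++ m, y, hy, hyd', by simp⟩

theorem exists_straddle_of_infix_flatten {v : List α} {cs : List (List α)} (hv : v ≠ [])
    (h : v <:+: cs.flatten) (hcs : ∀ c ∈ cs, ¬ v <:+: c) :
    ∃ c d, [c, d] <+ cs ∧ ∃ x m y, x ≠ [] ∧ y ≠ [] ∧ x <:+ c ∧ y <+: d ∧ v = x ++ m ++ y := by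
  induction cs with
  | nil => exact absurd (infix_nil.1 h) hv
  | cons c cs ih =>
    rw [flatten_cons, infix_append_iff_ne_nil] at h
    rcases h with hc | hflat | ⟨x, z, hx, hz, rfl, hxc, hzf⟩
    · exact absurd hc (hcs c mem_cons_self)
    · obtain ⟨c', d, hsub, rest⟩ := ih hflat fun c' hc' => hcs c' (mem_cons_of_mem _ hc')
      exact ⟨c', d, hsub.cons c, rest⟩
    · obtain ⟨d, hd, m, y, hy, hyd, rfl⟩ := exists_prefix_of_prefix_flatten hz hzf
      exact ⟨c, d, (singleton_sublist.2 hd).cons_cons c, x, m, y, hx, hy, hxc, hyd, by simp⟩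

end List

section gtLex

variable {X : Type*} [LinearOrder X] {u v w : List X}

theorem gtLex_iff_lex : ∀ {u v : List X}, gtLex u v ↔ List.Lex (· > ·) u v
  | [], [] => by simp [gtLex]
  | [], _ :: _ => by simp [gtLex]
  | _ :: _, [] => by simp [gtLex]
  | _ :: _, _ :: _ => by rw [gtLex, List.cons_lex_cons_iff, gtLex_iff_lex]

theorem gtLex_trans (h₁ : gtLex u v) (h₂ : gtLex v w) : gtLex u w :=
  gtLex_iff_lex.2 <| List.lex_trans (fun h₁ h₂ => gt_trans h₁ h₂)
    (gtLex_iff_lex.1 h₁) (gtLex_iff_lex.1 h₂)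

theorem gtLex_asymm (h : gtLex u v) : ¬ gtLex v u := fun h' =>
  List.lex_asymm (fun h₁ h₂ => lt_asymm h₁ h₂) (gtLex_iff_lex.1 h) (gtLex_iff_lex.1 h')

theorem gtLex_irrefl (u : List X) : ¬ gtLex u u := fun h => gtLex_asymm h h

theorem gtLex_trichotomous (u v : List X) : gtLex u v ∨ u = v ∨ gtLex v u := by
  simpa only [gtLex_iff_lex] using trichotomous_of (List.Lex (· > ·)) u v

theorem gtLex_of_gtLex_of_eq_or_gtLex (h : gtLex u v) (h' : v = w ∨ gtLex v w) : gtLex u w :=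
  h'.elim (· ▸ h) (gtLex_trans h)

theorem gtLex_append_right (u : List X) {x : List X} (hx : x ≠ []) : gtLex u (u ++ x) := by
  obtain ⟨a, x, rfl⟩ := List.exists_cons_of_ne_nil hx
  simpa [gtLex_iff_lex] using List.Lex.append_left (· > ·) (List.Lex.nil (a := a) (l := x)) u

theorem eq_or_gtLex_of_prefix (h : u <+: v) : u = v ∨ gtLex u v := by
  obtain ⟨x, rfl⟩ := h
  rcases eq_or_ne x [] with rfl | hx
  · simp
  · exact .inr (gtLex_append_right u hx)

theorem gtLex_of_append_left (s : List X) (h : gtLex (s ++ u) (s ++ v)) : gtLex u v :=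
  gtLex_iff_lex.2 <| List.Lex.of_append_left s (gtLex_iff_lex.1 h)

theorem gtLex_append_of_not_prefix (h : gtLex u v) (hp : ¬ u <+: v) (s t : List X) :
    gtLex (u ++ s) (v ++ t) :=
  gtLex_iff_lex.2 <| (gtLex_iff_lex.1 h).append_of_not_prefix hp s t

end gtLex

section IsALSW

variable {X : Type*} [LinearOrder X] {w u s : List X}

theorem IsALSW.gtLex_of_eq_append (hw : IsALSW w) (hu : u ≠ []) (hs : s ≠ []) (h : w = u ++ s) :
    gtLex w s := by
  have hrot : gtLex w (s ++ u) := hw.2 u s hu hs h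
  rcases gtLex_trichotomous w s with hws | rfl | hsw
  · exact hws
  · simp [hu] at h
  · exfalso
    by_cases hpre : s <+: w
    · -- `s` is a border of `w = s ++ m = u ++ s`, and `w ≻ s ++ u` forces `m ++ s ≻ u ++ s = w`
      obtain ⟨m, rfl⟩ := hpre
      have hlen : m.length = u.length := by
        have := congrArg List.length h
        simp only [List.length_append] at this
        omega
      have hmu : gtLex m u := gtLex_of_append_left s hrot
      have hm : m ≠ [] := by rintro rfl; simp_all
      have hms : gtLex (m ++ s) (s ++ m) := h ▸
        gtLex_append_of_not_prefix hmu (fun hp => gtLex_irrefl _ (hp.eq_of_length hlen ▸ hmu)) s s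
      exact gtLex_asymm (hw.2 s m hs hm rfl) hms
    · exact gtLex_asymm hrot (by simpa using gtLex_append_of_not_prefix hsw hpre u [])

theorem IsALSW.eq_or_gtLex_of_suffix (hw : IsALSW w) (hs : s ≠ []) (h : s <:+ w) :
    w = s ∨ gtLex w s := by
  obtain ⟨u, rfl⟩ := h
  rcases eq_or_ne u [] with rfl | hu
  · simp
  · exact .inr (hw.gtLex_of_eq_append hu hs rfl)

theorem not_isALSW_of_straddle {c d x m y : List X} (hc : IsALSW c) (hx : x ≠ []) (hy : y ≠ [])
    (hxc : x <:+ c) (hyd : y <+: d) (hcd : c = d ∨ gtLex d c) : ¬ IsALSW (x ++ m ++ y) := by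
  intro hv
  have hvy : gtLex (x ++ m ++ y) y := hv.gtLex_of_eq_append (by simp [hx]) hy rfl
  have hvd := gtLex_of_gtLex_of_eq_or_gtLex hvy (eq_or_gtLex_of_prefix hyd)
  have hvc := gtLex_of_gtLex_of_eq_or_gtLex hvd (hcd.imp Eq.symm id)
  have hvx := gtLex_of_gtLex_of_eq_or_gtLex hvc (hc.eq_or_gtLex_of_suffix hx hxc)
  have hxv : gtLex x (x ++ m ++ y) := by
    simpa using gtLex_append_right x (by simp [hy] : m ++ y ≠ [])
  exact gtLex_asymm hvx hxv

end IsALSW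

theorem pairwise_of_isChain_eq_or_gtLex {X : Type*} [LinearOrder X] {cs : List (List X)}
    (h : cs.IsChain (fun c d => c = d ∨ gtLex d c)) : cs.Pairwise (fun c d => c = d ∨ gtLex d c) :=
  haveI : Trans (fun c d : List X => c = d ∨ gtLex d c) (fun c d => c = d ∨ gtLex d c)
      (fun c d => c = d ∨ gtLex d c) :=
    ⟨fun h₁ h₂ => h₁.elim (· ▸ h₂) fun h₁ => .inr (h₂.elim (· ▸ h₁) (gtLex_trans · h₁))⟩
  List.IsChain.pairwise h

/-- In the Shirshov factorization `w = c₁c₂⋯cₙ` into a nondecreasing product of Lyndon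
words, every Lyndon factor `v` of `w` is a factor of one of the `cᵢ`. -/
theorem lyndon_factor_in_shirshov_factor {X : Type*} [LinearOrder X] (w v : List X)
    (cs : List (List X)) (hjoin : cs.flatten = w) (hc : ∀ c ∈ cs, IsALSW c)
    (hchain : cs.Chain' (fun c d => c = d ∨ gtLex d c))
    (hv : IsALSW v) (hinf : v <:+: w) :
    ∃ c ∈ cs, v <:+: c := by
  subst hjoin
  by_contra! hnot
  obtain ⟨c, d, hcd, x, m, y, hx, hy, hxc, hyd, rfl⟩ :=
    List.exists_straddle_of_infix_flatten hv.1 hinf hnot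
  have hcd' : c = d ∨ gtLex d c := by
    simpa using (pairwise_of_isChain_eq_or_gtLex hchain).sublist hcd
  exact not_isALSW_of_straddle (hc c (hcd.subset (by simp))) hx hy hxc hyd hcd' hv
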